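/- Double robustness of the DR population risk: let Θ be a set, (g_β)_{β∈Θ} a family of bounded measurable functions 𝒳 → ℝ, f† : 𝒳 → ℝ bounded measurable, and r† : 𝒳 → ℝ nonnegative bounded measurable. If either f†(x) = f₀(x) for p-almost every x, or r†(x) = r₀(x) for p-almost every x, then for every β* ∈ Θ: β* minimizes β ↦ R̈(g_β; f†, r†) over Θ if and only if β* minimizes the test risk β ↦ ∫_{𝒳×ℝ} (y − g_β(x))² dQ(x,y) over Θ. -/

import Mathlib

/-!
By the bias-variance decomposition under each `κ x`, the DR risk of `u` exceeds its test risk by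
`∫ (r† - r₀) (σ² + (f₀ - u)² - (f† - u)²) dp`, where `σ² x` is the variance of `κ x`. Either
hypothesis makes the `u`-dependent part `(r† - r₀) ((f₀ - u)² - (f† - u)²)` vanish `p`-a.e., so
the two risks differ by a constant and have the same minimizers.
-/

open MeasureTheory ProbabilityTheory Set

lemma sub_sq_le_add_sq {a b A B : ℝ} (ha : |a| ≤ A) (hb : |b| ≤ B) :
    (a - b) ^ 2 ≤ (A + B) ^ 2 := by
  rw [← sq_abs]
  exact pow_le_pow_left₀ (abs_nonneg _) ((abs_sub a b).trans (add_le_add ha hb)) 2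

namespace MeasureTheory

variable {α β : Type*} [MeasurableSpace α] [MeasurableSpace β] {μ : Measure α}

lemma integrable_sub_sq_of_ae_abs_le [IsFiniteMeasure μ] {u v : α → ℝ}
    (hu : AEStronglyMeasurable u μ) (hv : AEStronglyMeasurable v μ) {U V : ℝ}
    (hU : ∀ᵐ x ∂μ, |u x| ≤ U) (hV : ∀ᵐ x ∂μ, |v x| ≤ V) :
    Integrable (fun x => (u x - v x) ^ 2) μ := by
  refine Integrable.of_bound ((hu.sub hv).pow 2) ((U + V) ^ 2) ?_
  filter_upwards [hU, hV] with x hux hvx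
  rw [Real.norm_eq_abs, abs_sq]
  exact sub_sq_le_add_sq hux hvx

lemma integral_withDensity_ofReal {r : α → ℝ} (hr : Measurable r) (hr0 : 0 ≤ᵐ[μ] r)
    (h : α → ℝ) :
    ∫ x, h x ∂μ.withDensity (fun x => ENNReal.ofReal (r x)) = ∫ x, r x * h x ∂μ := by
  rw [integral_withDensity_eq_integral_toReal_smul hr.ennreal_ofReal
    (ae_of_all _ fun _ => ENNReal.ofReal_lt_top)]
  refine integral_congr_ae ?_
  filter_upwards [hr0] with x hx
  rw [ENNReal.toReal_ofReal hx, smul_eq_mul]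

lemma integrable_withDensity_ofReal_iff {r : α → ℝ} (hr : Measurable r) (hr0 : 0 ≤ᵐ[μ] r)
    {h : α → ℝ} :
    Integrable h (μ.withDensity (fun x => ENNReal.ofReal (r x))) ↔
      Integrable (fun x => r x * h x) μ := by
  rw [integrable_withDensity_iff_integrable_smul' hr.ennreal_ofReal
    (ae_of_all _ fun _ => ENNReal.ofReal_lt_top)]
  refine integrable_congr ?_
  filter_upwards [hr0] with x hx
  rw [ENNReal.toReal_ofReal hx, smul_eq_mul]

lemma Integrable.integral_measure_compProd [SFinite μ] {κ : Kernel α β} [IsSFiniteKernel κ]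
    {E : Type*} [NormedAddCommGroup E] [NormedSpace ℝ E] {f : α × β → E} (hf : Integrable f (μ ⊗ₘ κ)) :
    Integrable (fun x => ∫ y, f (x, y) ∂κ x) μ := by
  simpa using (show Integrable f ((Kernel.const Unit μ ⊗ₖ Kernel.prodMkLeft Unit κ) ()) from
    hf).integral_compProd

end MeasureTheory

namespace ProbabilityTheory

lemma integral_sub_sq_eq_variance_add {Ω : Type*} [MeasurableSpace Ω] {μ : Measure Ω}
    [IsProbabilityMeasure μ] {X : Ω → ℝ} (hX : MemLp X 2 μ) (c : ℝ) :
    ∫ ω, (X ω - c) ^ 2 ∂μ = Var[X; μ] + (μ[X] - c) ^ 2 := by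
  have hXc : MemLp (fun ω => X ω - c) 2 μ := hX.sub (memLp_const c)
  rw [← variance_sub_const hX.aestronglyMeasurable c, variance_eq_sub hXc,
    integral_sub (hX.integrable one_le_two) (integrable_const c), integral_const]
  simp

end ProbabilityTheory

section Risk

variable {𝒳 : Type*} [MeasurableSpace 𝒳]

noncomputable def sqRisk (P : Measure (𝒳 × ℝ)) (u : 𝒳 → ℝ) : ℝ := ∫ z, (z.2 - u z.1) ^ 2 ∂P

noncomputable def drRisk (P : Measure (𝒳 × ℝ)) (q : Measure 𝒳) (f r u : 𝒳 → ℝ) : ℝ :=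
  ∫ z, ((z.2 - u z.1) ^ 2 - (f z.1 - u z.1) ^ 2) * r z.1 ∂P + ∫ x, (f x - u x) ^ 2 ∂q

variable {μ : Measure 𝒳} {κ : Kernel 𝒳 ℝ} {C : ℝ}

lemma ae_compProd_abs_snd_le (hκ : ∀ x, ∀ᵐ y ∂κ x, y ∈ Icc (-C) C) :
    ∀ᵐ z ∂(μ ⊗ₘ κ), |z.2| ≤ C :=
  Measure.ae_compProd_of_ae_ae (measurableSet_le measurable_snd.abs measurable_const)
    (ae_of_all _ fun x => (hκ x).mono fun _ hy => abs_le.mpr hy)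

lemma integrable_compProd_sub_sq [IsFiniteMeasure μ] [IsFiniteKernel κ]
    (hκ : ∀ x, ∀ᵐ y ∂κ x, y ∈ Icc (-C) C) {u : 𝒳 → ℝ} (hu : Measurable u) {U : ℝ}
    (hU : ∀ x, |u x| ≤ U) :
    Integrable (fun z : 𝒳 × ℝ => (z.2 - u z.1) ^ 2) (μ ⊗ₘ κ) :=
  integrable_sub_sq_of_ae_abs_le measurable_snd.aestronglyMeasurable
    (hu.comp measurable_fst).aestronglyMeasurable (ae_compProd_abs_snd_le hκ)
    (ae_of_all _ fun z => hU z.1)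

lemma integral_sub_sq_kernel [IsMarkovKernel κ] (hκ : ∀ x, ∀ᵐ y ∂κ x, y ∈ Icc (-C) C)
    (x : 𝒳) (c : ℝ) :
    ∫ y, (y - c) ^ 2 ∂κ x = Var[id; κ x] + (∫ y, y ∂κ x - c) ^ 2 :=
  integral_sub_sq_eq_variance_add (memLp_of_bounded (hκ x) aestronglyMeasurable_id 2) c

lemma integrable_variance_add_sq [IsFiniteMeasure μ] [IsMarkovKernel κ]
    (hκ : ∀ x, ∀ᵐ y ∂κ x, y ∈ Icc (-C) C) {u : 𝒳 → ℝ} (hu : Measurable u) {U : ℝ}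
    (hU : ∀ x, |u x| ≤ U) :
    Integrable (fun x => Var[id; κ x] + (∫ y, y ∂κ x - u x) ^ 2) μ := by
  simpa only [integral_sub_sq_kernel hκ] using
    (integrable_compProd_sub_sq hκ hu hU (μ := μ)).integral_measure_compProd

lemma sqRisk_compProd [IsFiniteMeasure μ] [IsMarkovKernel κ]
    (hκ : ∀ x, ∀ᵐ y ∂κ x, y ∈ Icc (-C) C) {u : 𝒳 → ℝ} (hu : Measurable u) {U : ℝ}
    (hU : ∀ x, |u x| ≤ U) :
    sqRisk (μ ⊗ₘ κ) u = ∫ x, Var[id; κ x] + (∫ y, y ∂κ x - u x) ^ 2 ∂μ := by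
  rw [sqRisk, Measure.integral_compProd (integrable_compProd_sub_sq hκ hu hU)]
  simp only [integral_sub_sq_kernel hκ]

lemma drRisk_compProd [IsFiniteMeasure μ] [IsMarkovKernel κ]
    (hκ : ∀ x, ∀ᵐ y ∂κ x, y ∈ Icc (-C) C) {f r u : 𝒳 → ℝ}
    (hf : Measurable f) (hr : Measurable r) (hu : Measurable u) {F R U : ℝ}
    (hF : ∀ x, |f x| ≤ F) (hR : ∀ x, |r x| ≤ R) (hU : ∀ x, |u x| ≤ U) (q : Measure 𝒳) :
    drRisk (μ ⊗ₘ κ) q f r u =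
      ∫ x, (Var[id; κ x] + (∫ y, y ∂κ x - u x) ^ 2 - (f x - u x) ^ 2) * r x ∂μ
        + ∫ x, (f x - u x) ^ 2 ∂q := by
  have hfu : Integrable (fun z : 𝒳 × ℝ => (f z.1 - u z.1) ^ 2) (μ ⊗ₘ κ) :=
    integrable_sub_sq_of_ae_abs_le (hf.comp measurable_fst).aestronglyMeasurable
      (hu.comp measurable_fst).aestronglyMeasurable (ae_of_all _ fun z => hF z.1)
      (ae_of_all _ fun z => hU z.1)
  have hP : Integrable
      (fun z : 𝒳 × ℝ => ((z.2 - u z.1) ^ 2 - (f z.1 - u z.1) ^ 2) * r z.1) (μ ⊗ₘ κ) :=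
    ((integrable_compProd_sub_sq hκ hu hU).sub hfu).mul_bdd
      (hr.comp measurable_fst).aestronglyMeasurable (ae_of_all _ fun z => hR z.1)
  rw [drRisk, Measure.integral_compProd hP]
  congr 1
  refine integral_congr_ae (ae_of_all _ fun x => ?_)
  have hsq : Integrable (fun y => (y - u x) ^ 2) (κ x) :=
    integrable_sub_sq_of_ae_abs_le aestronglyMeasurable_id aestronglyMeasurable_const
      ((hκ x).mono fun _ hy => abs_le.mpr hy) (ae_of_all _ fun _ => hU x)
  simp only [integral_mul_const, integral_sub hsq (integrable_const _), integral_const,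
    integral_sub_sq_kernel hκ, probReal_univ, one_smul]

lemma drRisk_sub_sqRisk [IsFiniteMeasure μ] [IsMarkovKernel κ]
    (hκ : ∀ x, ∀ᵐ y ∂κ x, y ∈ Icc (-C) C) {r₀ : 𝒳 → ℝ} (hr₀ : Measurable r₀)
    (hr₀_nonneg : 0 ≤ᵐ[μ] r₀) (hr₀_int : Integrable r₀ μ) {f r u : 𝒳 → ℝ}
    (hf : Measurable f) (hr : Measurable r) (hu : Measurable u) {F R U : ℝ}
    (hF : ∀ x, |f x| ≤ F) (hR : ∀ x, |r x| ≤ R) (hU : ∀ x, |u x| ≤ U) :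
    drRisk (μ ⊗ₘ κ) (μ.withDensity fun x => ENNReal.ofReal (r₀ x)) f r u
        - sqRisk ((μ.withDensity fun x => ENNReal.ofReal (r₀ x)) ⊗ₘ κ) u =
      ∫ x, (r x - r₀ x) * (Var[id; κ x] + (∫ y, y ∂κ x - u x) ^ 2 - (f x - u x) ^ 2) ∂μ := by
  have := isFiniteMeasure_withDensity_ofReal (μ := μ) hr₀_int.2
  have hfu_bdd : ∀ x, ‖(f x - u x) ^ 2‖ ≤ (F + U) ^ 2 := fun x => by
    rw [Real.norm_eq_abs, abs_sq]
    exact sub_sq_le_add_sq (hF x) (hU x)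
  have hfu : Integrable (fun x => (f x - u x) ^ 2) μ :=
    .of_bound ((hf.sub hu).pow_const 2).aestronglyMeasurable _ (ae_of_all _ hfu_bdd)
  have hP : Integrable (fun x => (Var[id; κ x] + (∫ y, y ∂κ x - u x) ^ 2
      - (f x - u x) ^ 2) * r x) μ :=
    ((integrable_variance_add_sq hκ hu hU).sub hfu).mul_bdd hr.aestronglyMeasurable
      (ae_of_all _ hR)
  have hfq : Integrable (fun x => r₀ x * (f x - u x) ^ 2) μ :=
    hr₀_int.mul_bdd ((hf.sub hu).pow_const 2).aestronglyMeasurable (ae_of_all _ hfu_bdd)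
  have hQ := (integrable_withDensity_ofReal_iff hr₀ hr₀_nonneg).1
    (integrable_variance_add_sq hκ hu hU)
  rw [drRisk_compProd hκ hf hr hu hF hR hU, sqRisk_compProd hκ hu hU,
    integral_withDensity_ofReal hr₀ hr₀_nonneg, integral_withDensity_ofReal hr₀ hr₀_nonneg,
    ← integral_add hP hfq, ← integral_sub (hP.fun_add hfq) hQ]
  congr 1 with x
  ring

lemma drRisk_eq_sqRisk_add [IsFiniteMeasure μ] [IsMarkovKernel κ]
    (hκ : ∀ x, ∀ᵐ y ∂κ x, y ∈ Icc (-C) C) {r₀ : 𝒳 → ℝ} (hr₀ : Measurable r₀)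
    (hr₀_nonneg : 0 ≤ᵐ[μ] r₀) (hr₀_int : Integrable r₀ μ) {f r u : 𝒳 → ℝ}
    (hf : Measurable f) (hr : Measurable r) (hu : Measurable u) {F R U : ℝ}
    (hF : ∀ x, |f x| ≤ F) (hR : ∀ x, |r x| ≤ R) (hU : ∀ x, |u x| ≤ U)
    (hdr : (∀ᵐ x ∂μ, f x = ∫ y, y ∂κ x) ∨ (∀ᵐ x ∂μ, r x = r₀ x)) :
    drRisk (μ ⊗ₘ κ) (μ.withDensity fun x => ENNReal.ofReal (r₀ x)) f r u =
      sqRisk ((μ.withDensity fun x => ENNReal.ofReal (r₀ x)) ⊗ₘ κ) u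
        + ∫ x, (r x - r₀ x) * Var[id; κ x] ∂μ := by
  rw [← sub_eq_iff_eq_add', drRisk_sub_sqRisk hκ hr₀ hr₀_nonneg hr₀_int hf hr hu hF hR hU]
  refine integral_congr_ae ?_
  rcases hdr with hf_eq | hr_eq
  · filter_upwards [hf_eq] with x hx
    rw [hx]
    ring
  · filter_upwards [hr_eq] with x hx
    rw [hx]
    ring

end Risk

theorem double_robustness_dr_risk_minimizer_general
    {𝒳 : Type*} [MeasurableSpace 𝒳]
    (p : Measure 𝒳) [IsProbabilityMeasure p]
    (r₀ : 𝒳 → ℝ) (hr₀_meas : Measurable r₀) (hr₀_nonneg : ∀ x, 0 ≤ r₀ x)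
    (hr₀_int : ∫ x, r₀ x ∂p = 1)
    (κ : Kernel 𝒳 ℝ) [IsMarkovKernel κ]
    (C : ℝ) (hκ_supp : ∀ x, ∀ᵐ y ∂(κ x), y ∈ Set.Icc (-C) C)
    (f₀ : 𝒳 → ℝ) (hf₀ : ∀ x, f₀ x = ∫ y, y ∂(κ x))
    (fdag : 𝒳 → ℝ) (hfdag_meas : Measurable fdag)
    (Cfdag : ℝ) (hfdag_bdd : ∀ x, |fdag x| ≤ Cfdag)
    (rdag : 𝒳 → ℝ) (hrdag_meas : Measurable rdag) (hrdag_nonneg : ∀ x, 0 ≤ rdag x)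
    (Crdag : ℝ) (hrdag_bdd : ∀ x, rdag x ≤ Crdag)
    {Θ : Type*} (g : Θ → 𝒳 → ℝ) (hg_meas : ∀ β, Measurable (g β))
    (hg_bdd : ∀ β, ∃ Cg, ∀ x, |g β x| ≤ Cg)
    (hdr : (∀ᵐ x ∂p, fdag x = f₀ x) ∨ (∀ᵐ x ∂p, rdag x = r₀ x))
    (βstar : Θ) :
    (∀ β : Θ,
        (∫ z : 𝒳 × ℝ, ((z.2 - g βstar z.1) ^ 2 - (fdag z.1 - g βstar z.1) ^ 2) * rdag z.1
              ∂(p.compProd κ)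
            + ∫ x, (fdag x - g βstar x) ^ 2
              ∂(p.withDensity (fun x => ENNReal.ofReal (r₀ x))))
          ≤ (∫ z : 𝒳 × ℝ, ((z.2 - g β z.1) ^ 2 - (fdag z.1 - g β z.1) ^ 2) * rdag z.1
              ∂(p.compProd κ)
            + ∫ x, (fdag x - g β x) ^ 2
              ∂(p.withDensity (fun x => ENNReal.ofReal (r₀ x)))))
      ↔ (∀ β : Θ,
        ∫ z : 𝒳 × ℝ, (z.2 - g βstar z.1) ^ 2
            ∂((p.withDensity (fun x => ENNReal.ofReal (r₀ x))).compProd κ)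
          ≤ ∫ z : 𝒳 × ℝ, (z.2 - g β z.1) ^ 2
            ∂((p.withDensity (fun x => ENNReal.ofReal (r₀ x))).compProd κ)) := by
  set q := p.withDensity fun x => ENNReal.ofReal (r₀ x)
  have hr₀_integrable : Integrable r₀ p := .of_integral_ne_zero (by simp [hr₀_int])
  have hrdag_abs : ∀ x, |rdag x| ≤ Crdag := fun x =>
    (abs_of_nonneg (hrdag_nonneg x)).trans_le (hrdag_bdd x)
  simp only [hf₀] at hdr
  have key : ∀ β, drRisk (p ⊗ₘ κ) q fdag rdag (g β) =
      sqRisk (q ⊗ₘ κ) (g β) + ∫ x, (rdag x - r₀ x) * Var[id; κ x] ∂p := fun β =>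
    drRisk_eq_sqRisk_add hκ_supp hr₀_meas (ae_of_all _ hr₀_nonneg) hr₀_integrable hfdag_meas
      hrdag_meas (hg_meas β) hfdag_bdd hrdag_abs (hg_bdd β).choose_spec hdr
  change (∀ β, drRisk (p ⊗ₘ κ) q fdag rdag (g βstar) ≤ drRisk (p ⊗ₘ κ) q fdag rdag (g β)) ↔
    ∀ β, sqRisk (q ⊗ₘ κ) (g βstar) ≤ sqRisk (q ⊗ₘ κ) (g β)
  simp only [key, add_le_add_iff_right]

/-- Double robustness of the DR population risk: if either `f† = f₀` `p`-a.e. or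
`r† = r₀` `p`-a.e., then `β*` minimizes the DR risk `β ↦ R̈(g β; f†, r†)` over `Θ`
iff `β*` minimizes the test risk `β ↦ ∫ (y − g β x)² dQ` over `Θ`. -/
theorem double_robustness_dr_risk_minimizer
    {𝒳 : Type*} [MeasurableSpace 𝒳]
    (p : Measure 𝒳) [IsProbabilityMeasure p]
    (r₀ : 𝒳 → ℝ) (hr₀_meas : Measurable r₀) (hr₀_nonneg : ∀ x, 0 ≤ r₀ x)
    (Cr : ℝ) (hr₀_bdd : ∀ x, r₀ x ≤ Cr)
    (hr₀_int : ∫ x, r₀ x ∂p = 1)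
    (κ : Kernel 𝒳 ℝ) [IsMarkovKernel κ]
    (C : ℝ) (hC : 0 < C) (hκ_supp : ∀ x, ∀ᵐ y ∂(κ x), y ∈ Set.Icc (-C) C)
    (f₀ : 𝒳 → ℝ) (hf₀ : ∀ x, f₀ x = ∫ y, y ∂(κ x))
    (fdag : 𝒳 → ℝ) (hfdag_meas : Measurable fdag)
    (Cfdag : ℝ) (hfdag_bdd : ∀ x, |fdag x| ≤ Cfdag)
    (rdag : 𝒳 → ℝ) (hrdag_meas : Measurable rdag) (hrdag_nonneg : ∀ x, 0 ≤ rdag x)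
    (Crdag : ℝ) (hrdag_bdd : ∀ x, rdag x ≤ Crdag)
    {Θ : Type*} (g : Θ → 𝒳 → ℝ) (hg_meas : ∀ β, Measurable (g β))
    (hg_bdd : ∀ β, ∃ Cg, ∀ x, |g β x| ≤ Cg)
    (hdr : (∀ᵐ x ∂p, fdag x = f₀ x) ∨ (∀ᵐ x ∂p, rdag x = r₀ x))
    (βstar : Θ) :
    (∀ β : Θ,
        (∫ z : 𝒳 × ℝ, ((z.2 - g βstar z.1) ^ 2 - (fdag z.1 - g βstar z.1) ^ 2) * rdag z.1
              ∂(p.compProd κ)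
            + ∫ x, (fdag x - g βstar x) ^ 2
              ∂(p.withDensity (fun x => ENNReal.ofReal (r₀ x))))
          ≤ (∫ z : 𝒳 × ℝ, ((z.2 - g β z.1) ^ 2 - (fdag z.1 - g β z.1) ^ 2) * rdag z.1
              ∂(p.compProd κ)
            + ∫ x, (fdag x - g β x) ^ 2
              ∂(p.withDensity (fun x => ENNReal.ofReal (r₀ x)))))
      ↔ (∀ β : Θ,
        ∫ z : 𝒳 × ℝ, (z.2 - g βstar z.1) ^ 2
            ∂((p.withDensity (fun x => ENNReal.ofReal (r₀ x))).compProd κ)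
          ≤ ∫ z : 𝒳 × ℝ, (z.2 - g β z.1) ^ 2
            ∂((p.withDensity (fun x => ENNReal.ofReal (r₀ x))).compProd κ)) :=
  double_robustness_dr_risk_minimizer_general p r₀ hr₀_meas hr₀_nonneg hr₀_int κ C hκ_supp f₀ hf₀
    fdag hfdag_meas Cfdag hfdag_bdd rdag hrdag_meas hrdag_nonneg Crdag hrdag_bdd g hg_meas hg_bdd
    hdr βstar
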